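/- Let J be a B(H)-ideal, φ : H → H ⊕ H a unitary operator, D ∈ B(H), and S := φ⁻¹ ∘ (D ⊕ 0) ∘ φ, where D ⊕ 0 is the operator on H ⊕ H acting as D on the first summand and 0 on the second. Assume S ∈ J. If U S U* ∈ (S)_J for every unitary U ∈ B(H), then (S)_J is a two-sided ideal of B(H). -/

import Mathlib

open Pointwise

variable {H : Type*} [NormedAddCommGroup H] [InnerProductSpace ℂ H] [CompleteSpace H]
  [TopologicalSpace.SeparableSpace H]

/-- A `B(H)`-ideal: a two-sided ideal of the algebra `B(H)` of bounded operators on `H`. -/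
def IsBHIdeal (J : Set (H →L[ℂ] H)) : Prop :=
  0 ∈ J ∧ (∀ x ∈ J, ∀ y ∈ J, x + y ∈ J) ∧
    (∀ (A : H →L[ℂ] H), ∀ x ∈ J, A * x ∈ J) ∧
    (∀ (A : H →L[ℂ] H), ∀ x ∈ J, x * A ∈ J)

/-- `I` is a `J`-ideal (a subideal): a `ℂ`-linear subspace of `B(H)` contained in `J` that is
closed under left and right multiplication by elements of `J`. -/
def IsSubideal (J I : Set (H →L[ℂ] H)) : Prop :=
  I ⊆ J ∧ 0 ∈ I ∧ (∀ x ∈ I, ∀ y ∈ I, x + y ∈ I) ∧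
    (∀ (c : ℂ), ∀ x ∈ I, c • x ∈ I) ∧
    (∀ A ∈ J, ∀ x ∈ I, A * x ∈ I ∧ x * A ∈ I)

/-- `(𝒮)_J`, the smallest `J`-ideal containing the set `𝒮`. -/
def subidealGen (J 𝒮 : Set (H →L[ℂ] H)) : Set (H →L[ℂ] H) :=
  ⋂₀ {I | IsSubideal J I ∧ 𝒮 ⊆ I}

/-- `(𝒮)`, the smallest `B(H)`-ideal containing the set `𝒮`. -/
def idealGen (𝒮 : Set (H →L[ℂ] H)) : Set (H →L[ℂ] H) :=
  ⋂₀ {I | IsBHIdeal I ∧ 𝒮 ⊆ I}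

/-- The product `IJ` of two ideals: the set of finite sums `Σ Xᵢ Yᵢ` with `Xᵢ ∈ I`, `Yᵢ ∈ J`. -/
def idealProd (I J : Set (H →L[ℂ] H)) : Set (H →L[ℂ] H) :=
  {T | ∃ (n : ℕ) (X Y : Fin n → (H →L[ℂ] H)),
    (∀ i, X i ∈ I) ∧ (∀ i, Y i ∈ J) ∧ T = ∑ i, X i * Y i}

/-- `J(𝒮)J`: the set of finite sums `Σ Aᵢ Xᵢ Bᵢ` with `Aᵢ, Bᵢ ∈ J` and `Xᵢ ∈ (𝒮)`. -/
def JSJ (J 𝒮 : Set (H →L[ℂ] H)) : Set (H →L[ℂ] H) :=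
  {T | ∃ (n : ℕ) (A X B : Fin n → (H →L[ℂ] H)),
    (∀ i, A i ∈ J) ∧ (∀ i, B i ∈ J) ∧ (∀ i, X i ∈ idealGen 𝒮) ∧
    T = ∑ i, A i * X i * B i}

/-- `U_J(H)`: the unitaries of the form `1 + A` with `A ∈ J`. -/
def unitaryJ (J : Set (H →L[ℂ] H)) : Set (H →L[ℂ] H) :=
  {U | U ∈ unitary (H →L[ℂ] H) ∧ U - 1 ∈ J}

/-- The operator `A ⊕ B` on the Hilbert space direct sum `H ⊕ H`. -/
noncomputable def oplus (A B : H →L[ℂ] H) : WithLp 2 (H × H) →L[ℂ] WithLp 2 (H × H) :=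
  (((WithLp.prodContinuousLinearEquiv 2 ℂ H H).symm : (H × H) →L[ℂ] WithLp 2 (H × H))).comp
    ((A.prodMap B).comp
      ((WithLp.prodContinuousLinearEquiv 2 ℂ H H : WithLp 2 (H × H) ≃L[ℂ] H × H) :
        WithLp 2 (H × H) →L[ℂ] (H × H)))

/-- `φ⁻¹ ∘ T ∘ φ` for a unitary `φ : H → H ⊕ H` and `T` an operator on `H ⊕ H`. -/
noncomputable def conjOp (φ : H ≃ₗᵢ[ℂ] WithLp 2 (H × H))
    (T : WithLp 2 (H × H) →L[ℂ] WithLp 2 (H × H)) : H →L[ℂ] H :=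
  ((φ.symm.toContinuousLinearEquiv : WithLp 2 (H × H) ≃L[ℂ] H) :
      WithLp 2 (H × H) →L[ℂ] H).comp
    (T.comp ((φ.toContinuousLinearEquiv : H ≃L[ℂ] WithLp 2 (H × H)) : H →L[ℂ] WithLp 2 (H × H)))

/-!
Let `W = φ⁻¹ (flip) φ` and `Q = φ⁻¹ (0 ⊕ 1) φ`. Then `S' := W S W* = φ⁻¹ (0 ⊕ D) φ` lies in
`(S)_J` by hypothesis, and `QS = SQ = 0` while `QS'Q = S'`. Every element of `(S)_J` is a linear
combination of products `aSb` with `a, b ∈ J ∪ {1}`; compressing by `Q` kills those with `a = 1`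
or `b = 1`, so `S' = QS'Q` lies in the span `T` of `JSJ`. Since `T` is a two-sided ideal of
`B(H)`, also `S = W*S'W ∈ T`, whence `(S)_J ⊆ T ⊆ (S)_J`.
-/

open Submodule

theorem Set.mem_mul_singleton_mul {M : Type*} [Mul M] {s t : Set M} {c x : M} :
    x ∈ s * {c} * t ↔ ∃ a ∈ s, ∃ b ∈ t, a * c * b = x := by
  simp [Set.mem_mul]

section Sandwich

variable {R A : Type*} [CommSemiring R] [Semiring A] [Algebra R A]

theorem Submodule.mul_mul_mem_span_of_forall {s t : Set A} {a b x : A}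
    (h : ∀ y ∈ s, a * y * b ∈ span R t) (hx : x ∈ span R s) : a * x * b ∈ span R t :=
  (map_span_le (LinearMap.mulLeftRight R (a, b)) s _).2 h (mem_map_of_mem hx)

theorem Submodule.mul_mul_mem_span_mul_singleton_mul {s t s' t' : Set A} {a b c x : A}
    (hs : ∀ y ∈ s, a * y ∈ s') (ht : ∀ y ∈ t, y * b ∈ t')
    (hx : x ∈ span R (s * {c} * t)) :
    a * x * b ∈ span R (s' * {c} * t') := by
  refine mul_mul_mem_span_of_forall (fun y hy => subset_span ?_) hx
  obtain ⟨u, hu, v, hv, rfl⟩ := Set.mem_mul_singleton_mul.1 hy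
  exact Set.mem_mul_singleton_mul.2 ⟨a * u, hs u hu, v * b, ht v hv, by noncomm_ring⟩

end Sandwich

section Subideal

variable {E : Type*} [NormedAddCommGroup E] [InnerProductSpace ℂ E] {J I : Set (E →L[ℂ] E)}

theorem IsBHIdeal.mul_mul_mem (hI : IsBHIdeal I) (A B : E →L[ℂ] E) {x : E →L[ℂ] E}
    (hx : x ∈ I) : A * x * B ∈ I :=
  hI.2.2.2 B _ (hI.2.2.1 A x hx)

theorem IsBHIdeal.isSubideal (hI : IsBHIdeal I) (hIJ : I ⊆ J) : IsSubideal J I :=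
  ⟨hIJ, hI.1, hI.2.1, fun c x hx => by simpa using hI.2.2.1 (c • 1) x hx,
    fun A _ x hx => ⟨hI.2.2.1 A x hx, hI.2.2.2 A x hx⟩⟩

theorem Submodule.isSubideal {M : Submodule ℂ (E →L[ℂ] E)}
    (hMJ : (M : Set (E →L[ℂ] E)) ⊆ J)
    (hM : ∀ A ∈ J, ∀ x ∈ M, A * x ∈ M ∧ x * A ∈ M) : IsSubideal J M :=
  ⟨hMJ, M.zero_mem, fun _ hx _ hy => M.add_mem hx hy, fun c _ hx => M.smul_mem c hx, hM⟩

def IsSubideal.toSubmodule (hI : IsSubideal J I) : Submodule ℂ (E →L[ℂ] E) where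
  carrier := I
  zero_mem' := hI.2.1
  add_mem' hx hy := hI.2.2.1 _ hx _ hy
  smul_mem' c _ hx := hI.2.2.2.1 c _ hx

theorem subset_subidealGen (𝒮 : Set (E →L[ℂ] E)) : 𝒮 ⊆ subidealGen J 𝒮 :=
  Set.subset_sInter fun _ hI => hI.2

theorem subidealGen_subset {𝒮 : Set (E →L[ℂ] E)} (hI : IsSubideal J I) (h𝒮 : 𝒮 ⊆ I) :
    subidealGen J 𝒮 ⊆ I :=
  Set.sInter_subset_of_mem ⟨hI, h𝒮⟩

theorem isSubideal_sInter {𝓕 : Set (Set (E →L[ℂ] E))} (hne : 𝓕.Nonempty)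
    (h𝓕 : ∀ I ∈ 𝓕, IsSubideal J I) : IsSubideal J (⋂₀ 𝓕) := by
  obtain ⟨I₀, hI₀⟩ := hne
  refine ⟨(Set.sInter_subset_of_mem hI₀).trans (h𝓕 I₀ hI₀).1,
    Set.mem_sInter.2 fun I hI => (h𝓕 I hI).2.1, fun x hx y hy => ?_, fun c x hx => ?_,
    fun A hA x hx => ⟨?_, ?_⟩⟩ <;> refine Set.mem_sInter.2 fun I hI => ?_
  · exact (h𝓕 I hI).2.2.1 x (hx I hI) y (hy I hI)
  · exact (h𝓕 I hI).2.2.2.1 c x (hx I hI)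
  · exact ((h𝓕 I hI).2.2.2.2 A hA x (hx I hI)).1
  · exact ((h𝓕 I hI).2.2.2.2 A hA x (hx I hI)).2

theorem isSubideal_subidealGen (hJ : IsBHIdeal J) {𝒮 : Set (E →L[ℂ] E)}
    (h𝒮 : 𝒮 ⊆ J) : IsSubideal J (subidealGen J 𝒮) :=
  isSubideal_sInter ⟨J, hJ.isSubideal subset_rfl, h𝒮⟩ fun _ hI => hI.1

end Subideal

section Singleton

variable {E : Type*} [NormedAddCommGroup E] [InnerProductSpace ℂ E]
  {J : Set (E →L[ℂ] E)} {S : E →L[ℂ] E}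

theorem mul_mul_mem_span_sandwich (hJ : IsBHIdeal J) (A B : E →L[ℂ] E) {x : E →L[ℂ] E}
    (hx : x ∈ span ℂ (J * {S} * J)) : A * x * B ∈ span ℂ (J * {S} * J) :=
  mul_mul_mem_span_mul_singleton_mul (hJ.2.2.1 A) (hJ.2.2.2 B) hx

theorem isBHIdeal_span_sandwich (hJ : IsBHIdeal J) :
    IsBHIdeal (span ℂ (J * {S} * J) : Set (E →L[ℂ] E)) := by
  refine ⟨zero_mem _, fun _ hx _ hy => add_mem hx hy, fun A x hx => ?_, fun A x hx => ?_⟩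
  · simpa using mul_mul_mem_span_sandwich hJ A 1 hx
  · simpa using mul_mul_mem_span_sandwich hJ 1 A hx

theorem span_sandwich_subset_subidealGen (hJ : IsBHIdeal J) (hS : S ∈ J) :
    (span ℂ (J * {S} * J) : Set (E →L[ℂ] E)) ⊆ subidealGen J {S} := by
  have hgen := isSubideal_subidealGen hJ (Set.singleton_subset_iff.2 hS)
  refine SetLike.coe_subset_coe.2 (span_le (p := hgen.toSubmodule).2 fun x hx => ?_)
  obtain ⟨a, ha, b, hb, rfl⟩ := Set.mem_mul_singleton_mul.1 hx
  exact (hgen.2.2.2.2 b hb _ (hgen.2.2.2.2 a ha S (subset_subidealGen _ rfl)).1).2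

theorem subidealGen_singleton_subset_span (hJ : IsBHIdeal J) (hS : S ∈ J) :
    subidealGen J {S} ⊆ span ℂ (insert 1 J * {S} * insert 1 J) := by
  refine subidealGen_subset (Submodule.isSubideal ?_ fun A hA x hx => ⟨?_, ?_⟩) ?_
  · refine span_le (p := (hJ.isSubideal subset_rfl).toSubmodule).2 fun x hx => ?_
    obtain ⟨a, -, b, -, rfl⟩ := Set.mem_mul_singleton_mul.1 hx
    exact hJ.mul_mul_mem a b hS
  · simpa using mul_mul_mem_span_mul_singleton_mul (R := ℂ) (b := 1) (s' := insert 1 J)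
      (t' := insert 1 J) (fun y _ => Or.inr (hJ.2.2.2 y A hA)) (fun y hy => by simpa using hy) hx
  · simpa using mul_mul_mem_span_mul_singleton_mul (R := ℂ) (a := 1) (s' := insert 1 J)
      (t' := insert 1 J) (fun y hy => by simpa using hy) (fun y _ => Or.inr (hJ.2.2.1 y A hA)) hx
  · exact Set.singleton_subset_iff.2 (subset_span (Set.mem_mul_singleton_mul.2
      ⟨1, Set.mem_insert _ _, 1, Set.mem_insert _ _, by simp⟩))

theorem mul_mul_mem_span_sandwich_of_mem_subidealGen (hJ : IsBHIdeal J) (hS : S ∈ J)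
    {Q x : E →L[ℂ] E} (hQS : Q * S = 0) (hSQ : S * Q = 0) (hx : x ∈ subidealGen J {S}) :
    Q * x * Q ∈ span ℂ (J * {S} * J) := by
  refine mul_mul_mem_span_of_forall (fun y hy => ?_) (subidealGen_singleton_subset_span hJ hS hx)
  obtain ⟨a, rfl | ha, b, rfl | hb, rfl⟩ := Set.mem_mul_singleton_mul.1 hy
  · simp [hQS]
  · simp [← mul_assoc, hQS]
  · simp [mul_assoc, hSQ]
  · exact subset_span (Set.mem_mul_singleton_mul.2
      ⟨Q * a, hJ.2.2.1 Q a ha, b * Q, hJ.2.2.2 Q b hb, by noncomm_ring⟩)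

theorem isBHIdeal_subidealGen_of_compression (hJ : IsBHIdeal J) (hS : S ∈ J)
    {U V Q : E →L[ℂ] E} (hVU : V * U = 1) (hUS : U * S * V ∈ subidealGen J {S})
    (hQS : Q * S = 0) (hSQ : S * Q = 0) (hQUS : Q * (U * S * V) * Q = U * S * V) :
    IsBHIdeal (subidealGen J {S}) := by
  have hUST : U * S * V ∈ span ℂ (J * {S} * J) :=
    hQUS ▸ mul_mul_mem_span_sandwich_of_mem_subidealGen hJ hS hQS hSQ hUS
  have hST : S ∈ span ℂ (J * {S} * J) := by
    have hS_eq : V * (U * S * V) * U = S := by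
      rw [show V * (U * S * V) * U = V * U * S * (V * U) by noncomm_ring, hVU, one_mul, mul_one]
    simpa only [hS_eq] using mul_mul_mem_span_sandwich hJ V U hUST
  have hT : IsSubideal J (span ℂ (J * {S} * J) : Set (E →L[ℂ] E)) :=
    (isBHIdeal_span_sandwich hJ).isSubideal
      ((span_sandwich_subset_subidealGen hJ hS).trans
        (isSubideal_subidealGen hJ (Set.singleton_subset_iff.2 hS)).1)
  rw [(subidealGen_subset hT (Set.singleton_subset_iff.2 hST)).antisymm
    (span_sandwich_subset_subidealGen hJ hS)]
  exact isBHIdeal_span_sandwich hJ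

end Singleton

section DirectSum

variable {E : Type*} [NormedAddCommGroup E] [InnerProductSpace ℂ E]

open LinearIsometryEquiv

local notation "σ" => (withLpProdComm 2 ℂ E E :
  WithLp 2 (E × E) →L[ℂ] WithLp 2 (E × E))

theorem oplus_mul (A B C D : E →L[ℂ] E) : oplus A B * oplus C D = oplus (A * C) (B * D) := by
  ext; rfl

@[simp]
theorem oplus_zero : oplus (0 : E →L[ℂ] E) 0 = 0 := by
  ext; rfl

theorem withLpProdComm_mul_oplus_mul_withLpProdComm (A B : E →L[ℂ] E) :
    σ * oplus A B * σ = oplus B A := by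
  ext; rfl

theorem conjOp_mul (φ : E ≃ₗᵢ[ℂ] WithLp 2 (E × E))
    (T₁ T₂ : WithLp 2 (E × E) →L[ℂ] WithLp 2 (E × E)) :
    conjOp φ T₁ * conjOp φ T₂ = conjOp φ (T₁ * T₂) := by
  ext; simp [conjOp]

@[simp]
theorem conjOp_zero (φ : E ≃ₗᵢ[ℂ] WithLp 2 (E × E)) : conjOp φ 0 = 0 := by
  ext; simp [conjOp]

variable [CompleteSpace E] (φ : E ≃ₗᵢ[ℂ] WithLp 2 (E × E))

theorem conjOp_withLpProdComm_mem_unitary : conjOp φ σ ∈ unitary (E →L[ℂ] E) :=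
  (Unitary.linearIsometryEquiv.symm (φ.trans ((withLpProdComm 2 ℂ E E).trans φ.symm))).prop

theorem star_conjOp_withLpProdComm : star (conjOp φ σ) = conjOp φ σ :=
  star_eq_symm (φ.trans ((withLpProdComm 2 ℂ E E).trans φ.symm))

end DirectSum

theorem unitary_invariance_implies_BHIdeal_general (J : Set (H →L[ℂ] H)) (hJ : IsBHIdeal J)
    (φ : H ≃ₗᵢ[ℂ] WithLp 2 (H × H))
    (D S : H →L[ℂ] H) (hSdef : S = conjOp φ (oplus D 0)) (hS : S ∈ J)
    (hinv : ∀ U ∈ unitary (H →L[ℂ] H), U * S * star U ∈ subidealGen J {S}) :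
    IsBHIdeal (subidealGen J {S}) := by
  set W := conjOp φ (LinearIsometryEquiv.withLpProdComm 2 ℂ H H)
  have hW := conjOp_withLpProdComm_mem_unitary φ
  have hWS : W * S * star W = conjOp φ (oplus 0 D) := by
    rw [star_conjOp_withLpProdComm, hSdef, conjOp_mul, conjOp_mul,
      withLpProdComm_mul_oplus_mul_withLpProdComm]
  refine isBHIdeal_subidealGen_of_compression (Q := conjOp φ (oplus 0 1)) hJ hS
    (Unitary.star_mul_self_of_mem hW) (hinv W hW) ?_ ?_ ?_
  · simp [hSdef, conjOp_mul, oplus_mul]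
  · simp [hSdef, conjOp_mul, oplus_mul]
  · rw [hWS, conjOp_mul, conjOp_mul, oplus_mul, oplus_mul]
    simp

/-- if `S = φ⁻¹ (D ⊕ 0) φ ∈ J` and `(S)_J` is invariant under all unitary
conjugations, then `(S)_J` is a `B(H)`-ideal. -/
theorem unitary_invariance_implies_BHIdeal (J : Set (H →L[ℂ] H)) (hJ : IsBHIdeal J)
    (hinf : ¬FiniteDimensional ℂ H) (φ : H ≃ₗᵢ[ℂ] WithLp 2 (H × H))
    (D S : H →L[ℂ] H) (hSdef : S = conjOp φ (oplus D 0)) (hS : S ∈ J)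
    (hinv : ∀ U ∈ unitary (H →L[ℂ] H), U * S * star U ∈ subidealGen J {S}) :
    IsBHIdeal (subidealGen J {S}) :=
  unitary_invariance_implies_BHIdeal_general J hJ φ D S hSdef hS hinv
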